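/- arXiv:1509.07711 — 3 statements merged into one kernel-verified Lean document; each statement's English description precedes it below -/
import Mathlib

section
/- (Rearrangement maximizes logarithmic integral, Lemma 4.5 core.) Let C > 0, L > 0, and let H : ℝ → [0, C] be a measurable function supported in [-L, L] with ∫ H(x) dx = 2Cl, where l ≤ L. Let p ∈ [-L + l, L - l]. Let H' = C·𝟙_{[p-l, p+l]}. Then ∫_{-L}^{L} H(x) log(6L/|x - p|) dx ≤ ∫_{-L}^{L} H'(x) log(6L/|x - p|) dx. -/
/-! Bathtub principle: among densities `0 ≤ H ≤ C` of fixed mass, the weighted integral against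
a weight `w` is largest when all the mass sits where `w` is largest. With
`c = log (6L / l)`, the difference `H' - H` and `w - c` have the sign of `l - |x - p|` at every
`x ≠ p`, so `∫ (H' - H) (w - c) ≥ 0`; since `H` and `H'` have the same mass, the constant `c`
drops out of this integral. -/

open MeasureTheory Set Real

theorem integral_mul_le_integral_mul_of_ae_sign {α : Type*} [MeasurableSpace α] {μ : Measure α}
    {f g w : α → ℝ} (c : ℝ) (hf : Integrable f μ) (hg : Integrable g μ)
    (hfw : Integrable (fun x => f x * w x) μ) (hgw : Integrable (fun x => g x * w x) μ)
    (hfg : ∫ x, f x ∂μ = ∫ x, g x ∂μ) (hsign : ∀ᵐ x ∂μ, 0 ≤ (g x - f x) * (w x - c)) :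
    ∫ x, f x * w x ∂μ ≤ ∫ x, g x * w x ∂μ := by
  have hexpand : (fun x => (g x - f x) * (w x - c)) =
      fun x => (g x * w x - f x * w x) - c * (g x - f x) := by
    funext x; ring
  have hdiffw : Integrable (fun x => g x * w x - f x * w x) μ := hgw.sub hfw
  have hdiff : Integrable (fun x => c * (g x - f x)) μ := (hg.sub hf).const_mul c
  have key := integral_nonneg_of_ae hsign
  rw [hexpand, integral_sub hdiffw hdiff, integral_sub hgw hfw,
    integral_const_mul, integral_sub hg hf, hfg] at key
  linarith

theorem sub_mul_log_div_sub_log_div_nonneg {a l t h C : ℝ} (ha : 0 < a) (hl : 0 < l)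
    (ht : 0 < t) (h0 : 0 ≤ h) (hC : h ≤ C) :
    0 ≤ ((if t ≤ l then C else 0) - h) * (log (a / t) - log (a / l)) := by
  have hlog : log (a / t) - log (a / l) = log l - log t := by
    rw [log_div ha.ne' ht.ne', log_div ha.ne' hl.ne']; ring
  rw [hlog]
  split_ifs with htl
  · exact mul_nonneg (by linarith) (by linarith [log_le_log ht htl])
  · exact mul_nonneg_of_nonpos_of_nonpos (by linarith)
      (by linarith [log_le_log hl (not_le.1 htl).le])

theorem integral_indicator_Icc_const (p l C : ℝ) (hl : 0 ≤ l) :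
    ∫ x, (Icc (p - l) (p + l)).indicator (fun _ => C) x = 2 * C * l := by
  rw [integral_indicator measurableSet_Icc, setIntegral_const,
    volume_real_Icc_of_le (by linarith), smul_eq_mul]
  ring

theorem stmt8_general (C L l p : ℝ) (hC : 0 < C) (hL : 0 < L) (hl : 0 < l)
    (H : ℝ → ℝ)
    (hH0 : ∀ x : ℝ, 0 ≤ H x) (hHC : ∀ x : ℝ, H x ≤ C)
    (hmass : (∫ x : ℝ, H x) = 2 * C * l)
    (hintH : Integrable (fun x : ℝ => H x * Real.log (6 * L / |x - p|)))
    (hintH' : Integrable (fun x : ℝ =>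
      (if x ∈ Set.Icc (p - l) (p + l) then C else 0) * Real.log (6 * L / |x - p|))) :
    (∫ x : ℝ, H x * Real.log (6 * L / |x - p|)) ≤
      ∫ x : ℝ, (if x ∈ Set.Icc (p - l) (p + l) then C else 0) * Real.log (6 * L / |x - p|) := by
  -- a non-integrable function has integral `0`, so the mass condition forces integrability
  have hHint : Integrable H := Integrable.of_integral_ne_zero (by rw [hmass]; positivity)
  have hH' : (fun x => if x ∈ Icc (p - l) (p + l) then C else 0) =
      (Icc (p - l) (p + l)).indicator (fun _ => C) := by
    funext x; simp only [indicator_apply]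
  refine integral_mul_le_integral_mul_of_ae_sign (log (6 * L / l)) hHint ?_ hintH hintH' ?_ ?_
  · rw [hH']
    exact (integrable_indicator_iff measurableSet_Icc).2 (integrableOn_const measure_Icc_lt_top.ne)
  · rw [hmass, hH', integral_indicator_Icc_const p l C hl.le]
  · filter_upwards [volume.ae_ne p] with x hx
    have hmem : x ∈ Icc (p - l) (p + l) ↔ |x - p| ≤ l := by
      rw [abs_sub_comm, mem_Icc_iff_abs_le]
    simp only [hmem]
    exact sub_mul_log_div_sub_log_div_nonneg (by positivity) hl
      (abs_pos.2 (sub_ne_zero.2 hx)) (hH0 x) (hHC x)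

theorem stmt8 (C L l p : ℝ) (hC : 0 < C) (hL : 0 < L) (hl : 0 < l) (hlL : l ≤ L)
    (hp : Set.Icc (p - l) (p + l) ⊆ Set.Icc (-L) L)
    (H : ℝ → ℝ) (hHmeas : Measurable H)
    (hH0 : ∀ x : ℝ, 0 ≤ H x) (hHC : ∀ x : ℝ, H x ≤ C)
    (hsupp : ∀ x : ℝ, x ∉ Set.Icc (-L) L → H x = 0)
    (hmass : (∫ x : ℝ, H x) = 2 * C * l)
    (hintH : Integrable (fun x : ℝ => H x * Real.log (6 * L / |x - p|)))
    (hintH' : Integrable (fun x : ℝ =>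
      (if x ∈ Set.Icc (p - l) (p + l) then C else 0) * Real.log (6 * L / |x - p|))) :
    (∫ x : ℝ, H x * Real.log (6 * L / |x - p|)) ≤
      ∫ x : ℝ, (if x ∈ Set.Icc (p - l) (p + l) then C else 0) * Real.log (6 * L / |x - p|) :=
  stmt8_general C L l p hC hL hl H hH0 hHC hmass hintH hintH'
end

section
/- (Law-of-cosines separation estimate, Lemma 5.2 second part.) Let z : [0, N] → ℂ be a curve with z(0) = -ρ (ρ > 0 real) such that the angle θ(r, x) at -ρ in the triangle with vertices -ρ, z(r), x is bounded below: 1 - cos θ(r,x) ≥ c₀ > 0 for all r ∈ (0, N] and all real x, and |z(r) - (-ρ)| ≥ c₁ r. Then |x - z(r)|² ≥ c₀ · min(1, c₁²) · (r² + |x + ρ|²) for all x ∈ ℝ, r ∈ (0, N]. -/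
open InnerProductGeometry

theorem stmt11 (ρ N c₀ c₁ : ℝ) (hρ : 0 < ρ) (hN : 0 < N) (hc₀ : 0 < c₀) (hc₀' : c₀ ≤ 2)
    (hc₁ : 0 < c₁) (z : ℝ → ℂ)
    (hz : ∀ r ∈ Set.Ioc (0:ℝ) N, c₁ * r ≤ ‖z r + ρ‖)
    (hangle : ∀ (x : ℝ), ∀ r ∈ Set.Ioc (0:ℝ) N,
      c₀ ≤ 1 - Real.cos (InnerProductGeometry.angle ((x : ℂ) + ρ) (z r + ρ))) :
    ∀ (x : ℝ), ∀ r ∈ Set.Ioc (0:ℝ) N,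
      c₀ * min 1 (c₁ ^ 2) * (r ^ 2 + (x + ρ) ^ 2) ≤ ‖(x : ℂ) - z r‖ ^ 2 := by
  -- First, c₀ ≤ 1 from taking x = -ρ
  have hc1 : c₀ ≤ 1 := by
    have h := hangle (-ρ) N ⟨hN, le_refl N⟩
    have h0 : ((-ρ : ℝ) : ℂ) + ρ = 0 := by push_cast; ring
    rw [h0, InnerProductGeometry.angle_zero_left, Real.cos_pi_div_two] at h
    linarith
  intro x r hr
  obtain ⟨hr0, hrN⟩ := hr
  set a : ℂ := (x : ℂ) + ρ with ha
  set b : ℂ := z r + ρ with hb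
  have hab : (x : ℂ) - z r = a - b := by ring
  have hlaw : ‖a - b‖ ^ 2 = ‖a‖ ^ 2 + ‖b‖ ^ 2
      - 2 * (Real.cos (InnerProductGeometry.angle a b) * (‖a‖ * ‖b‖)) := by
    rw [InnerProductGeometry.cos_angle_mul_norm_mul_norm, @norm_sub_pow_two_real ℂ]
    ring
  have hcos : Real.cos (InnerProductGeometry.angle a b) ≤ 1 - c₀ := by
    have := hangle x r ⟨hr0, hrN⟩
    linarith
  have hbn : c₁ * r ≤ ‖b‖ := by
    have := hz r ⟨hr0, hrN⟩
    exact this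
  have hs : ‖a‖ = |x + ρ| := by
    rw [ha]
    rw [show ((x : ℂ) + ρ) = ((x + ρ : ℝ) : ℂ) by push_cast; ring, Complex.norm_real,
      Real.norm_eq_abs]
  have hsa : ‖a‖ ^ 2 = (x + ρ) ^ 2 := by rw [hs, sq_abs]
  have hmin1 : min 1 (c₁ ^ 2) ≤ 1 := min_le_left _ _
  have hmin2 : min 1 (c₁ ^ 2) ≤ c₁ ^ 2 := min_le_right _ _
  have hbn2 : c₁ ^ 2 * r ^ 2 ≤ ‖b‖ ^ 2 := by
    have h1 : 0 ≤ c₁ * r := by positivity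
    nlinarith
  have hcn : Real.cos (InnerProductGeometry.angle a b) * (‖a‖ * ‖b‖)
      ≤ (1 - c₀) * (‖a‖ * ‖b‖) := by
    have hnn : (0:ℝ) ≤ ‖a‖ * ‖b‖ := by positivity
    exact mul_le_mul_of_nonneg_right hcos hnn
  rw [hab, hlaw, hsa]
  have key : c₀ * ((x + ρ) ^ 2 + ‖b‖ ^ 2) ≤ (x + ρ) ^ 2 + ‖b‖ ^ 2
      - 2 * ((1 - c₀) * (‖a‖ * ‖b‖)) := by
    have hsq : ((x + ρ) ^ 2 : ℝ) = ‖a‖ ^ 2 := hsa.symm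
    nlinarith [sq_nonneg (‖a‖ - ‖b‖), mul_nonneg (norm_nonneg a) (norm_nonneg b)]
  have hmin0 : 0 ≤ min 1 (c₁ ^ 2) := le_min zero_le_one (by positivity)
  have step : c₀ * min 1 (c₁ ^ 2) * (r ^ 2 + (x + ρ) ^ 2)
      ≤ c₀ * ((x + ρ) ^ 2 + ‖b‖ ^ 2) := by
    have h1 : min 1 (c₁ ^ 2) * r ^ 2 ≤ ‖b‖ ^ 2 := by nlinarith [sq_nonneg r]
    have h2 : min 1 (c₁ ^ 2) * (x + ρ) ^ 2 ≤ (x + ρ) ^ 2 := by nlinarith [sq_nonneg (x + ρ)]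
    nlinarith
  linarith
end

section
/- (Core estimate of Lemma 5.5, tail part.) Let γ > 1. There is a constant c > 0 such that for all real x' with |x'| sufficiently large, ∫_{|x'|^{1/γ} + A}^{∞} r^{γ-1}/(r^γ - |x'|)² dr ≤ c |x'|^{-1 + 1/γ}, where A > 0 is a fixed constant (depending only on γ) guaranteeing r^γ - |x'| ≥ (γ/2) A (r - A)^{γ-1} > 0 on the integration domain. -/
/-! Substituting `t = r ^ γ` turns the integrand into `γ⁻¹ (t - |x'|)⁻²`, so the integral equals
`(γ ((|x'| ^ (1/γ) + A) ^ γ - |x'|))⁻¹`. With `s = |x'| ^ (1/γ)`, Bernoulli's inequality gives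
`(s + A) ^ γ - s ^ γ ≥ γ A s ^ (γ - 1)`, and `s ^ (γ - 1) = |x'| ^ (1 - 1/γ)`. -/

open MeasureTheory Set Filter Topology

theorem integral_Ioi_rpow_sub_one_div_rpow_sub_sq {γ a b : ℝ} (hγ : 0 < γ) (ha : 0 < a)
    (hb : b < a ^ γ) :
    ∫ x in Ioi a, x ^ (γ - 1) / (x ^ γ - b) ^ 2 = (γ * (a ^ γ - b))⁻¹ := by
  have hpos : ∀ x ∈ Ici a, 0 < x ^ γ - b := fun x hx =>
    sub_pos.2 (hb.trans_le (Real.rpow_le_rpow ha.le hx hγ.le))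
  have hderiv : ∀ x ∈ Ici a, HasDerivAt (fun x => -(γ * (x ^ γ - b))⁻¹)
      (x ^ (γ - 1) / (x ^ γ - b) ^ 2) x := by
    intro x hx
    have hx0 : x ≠ 0 := (ha.trans_le hx).ne'
    have h := ((((Real.hasDerivAt_rpow_const (p := γ) (Or.inl hx0)).sub_const b).const_mul γ).inv
      (mul_pos hγ (hpos x hx)).ne').neg
    refine h.congr_deriv ?_
    have hgap : x ^ γ - b ≠ 0 := (hpos x hx).ne'
    field_simp
  have hlim : Tendsto (fun x => -(γ * (x ^ γ - b))⁻¹) atTop (𝓝 0) := by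
    simpa [sub_eq_add_neg] using ((tendsto_atTop_add_const_right _ (-b)
      (tendsto_rpow_atTop hγ)).const_mul_atTop hγ).inv_tendsto_atTop.neg
  have hnonneg : ∀ x ∈ Ioi a, 0 ≤ x ^ (γ - 1) / (x ^ γ - b) ^ 2 := fun x hx =>
    div_nonneg (Real.rpow_nonneg (ha.trans hx).le _) (sq_nonneg _)
  rw [integral_Ioi_of_hasDerivAt_of_nonneg' hderiv hnonneg hlim]
  ring

theorem mul_mul_rpow_sub_one_le_rpow_add_sub_rpow {γ s A : ℝ} (hγ : 1 ≤ γ) (hs : 0 < s)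
    (hA : 0 ≤ A) : γ * A * s ^ (γ - 1) ≤ (s + A) ^ γ - s ^ γ := by
  have hbern := one_add_mul_self_le_rpow_one_add
    (show -1 ≤ A / s by linarith [div_nonneg hA hs.le]) hγ
  have hsγ : 0 < s ^ γ := Real.rpow_pos_of_pos hs γ
  have hsplit : (s + A) ^ γ = s ^ γ * (1 + A / s) ^ γ := by
    rw [← Real.mul_rpow hs.le (by positivity)]
    congr 1
    field_simp
  rw [hsplit, Real.rpow_sub_one hs.ne']
  have hscaled := mul_le_mul_of_nonneg_left hbern hsγ.le
  calc γ * A * (s ^ γ / s) = s ^ γ * (γ * (A / s)) := by ring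
    _ ≤ s ^ γ * (1 + A / s) ^ γ - s ^ γ := by linarith

theorem stmt12 (γ A : ℝ) (hγ : 1 < γ) (hA : 0 < A) :
    ∃ c > (0:ℝ), ∃ M : ℝ, ∀ x' : ℝ, M ≤ |x'| →
      (∫ r in Set.Ioi (|x'| ^ (1/γ) + A), r ^ (γ - 1) / (r ^ γ - |x'|) ^ 2) ≤
        c * |x'| ^ (-1 + 1/γ) := by
  have hγ0 : 0 < γ := by linarith
  refine ⟨(γ ^ 2 * A)⁻¹, by positivity, 1, fun x' hx' => ?_⟩
  set b := |x'|
  have hb : 0 < b := by linarith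
  set s := b ^ (1 / γ)
  have hs : 0 < s := Real.rpow_pos_of_pos hb _
  have hsγ : s ^ γ = b := by
    rw [← Real.rpow_mul hb.le, one_div_mul_cancel hγ0.ne', Real.rpow_one]
  have hrhs : b ^ (-1 + 1 / γ) = (s ^ (γ - 1))⁻¹ := by
    rw [← Real.rpow_mul hb.le, ← Real.rpow_neg hb.le]
    congr 1
    field_simp
    ring
  have hgap := mul_mul_rpow_sub_one_le_rpow_add_sub_rpow hγ.le hs hA.le
  rw [hsγ] at hgap
  have hgap0 : 0 < γ * A * s ^ (γ - 1) := by positivity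
  rw [integral_Ioi_rpow_sub_one_div_rpow_sub_sq hγ0 (by positivity) (by linarith), hrhs]
  calc (γ * ((s + A) ^ γ - b))⁻¹ ≤ (γ * (γ * A * s ^ (γ - 1)))⁻¹ := by gcongr
    _ = (γ ^ 2 * A)⁻¹ * (s ^ (γ - 1))⁻¹ := by ring
end
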